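/- Let E_ε = {x : xᵀPx ≤ ε} and E_C = {x : xᵀPx ≤ 1} with P symmetric positive definite and 0 < ε < 1. Then E_ε is contained in the interior of E_C, and the Euclidean distance from E_ε to the boundary of E_C is at least (1 - √ε)/√(λ_max(P)). -/

import Mathlib

/-!
`x ↦ √(xᵀPx)` is a norm, and by the Rayleigh bound `xᵀPx ≤ λ_max ‖x‖²` it is at most
`√λ_max` times the Euclidean norm. A point `y` on the boundary of `E_C` has `√(yᵀPy) = 1`, a
point `x` of `E_ε` has `√(xᵀPx) ≤ √ε`, so the triangle inequality for this norm gives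
`1 - √ε ≤ √((y - x)ᵀP(y - x)) ≤ √λ_max ‖y - x‖`.
-/

open Matrix

namespace Matrix

variable {ι : Type*} [Fintype ι]

theorem PosSemidef.sqrt_dotProduct_mulVec_add_le {P : Matrix ι ι ℝ} (hP : P.PosSemidef)
    (a b : ι → ℝ) :
    √((a + b) ⬝ᵥ P *ᵥ (a + b)) ≤ √(a ⬝ᵥ P *ᵥ a) + √(b ⬝ᵥ P *ᵥ b) := by
  let E := P.toSeminormedAddCommGroup hP
  have sqrt_eq_norm (v : ι → ℝ) : √(v ⬝ᵥ P *ᵥ v) = @norm _ E.toNorm v := by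
    rw [@norm_eq_sqrt_real_inner _ E (P.toInnerProductSpace hP) v, dotProduct_comm]
    rfl
  simpa only [sqrt_eq_norm] using @norm_add_le _ E.toSeminormedAddGroup a b

open scoped MatrixOrder in
theorem IsHermitian.dotProduct_mulVec_le_mul_dotProduct [DecidableEq ι] {P : Matrix ι ι ℝ}
    (hP : P.IsHermitian) {c : ℝ} (hc : c ∈ upperBounds (spectrum ℝ P)) (v : ι → ℝ) :
    v ⬝ᵥ P *ᵥ v ≤ c * (v ⬝ᵥ v) := by
  have hPc : P ≤ algebraMap ℝ _ c := (le_algebraMap_iff_spectrum_le hP.isSelfAdjoint).2 hc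
  simpa [sub_mulVec, Algebra.algebraMap_eq_smul_one, smul_mulVec, dotProduct_sub] using
    (le_iff.1 hPc).dotProduct_mulVec_nonneg v

theorem IsHermitian.sqrt_dotProduct_mulVec_le [DecidableEq ι] {P : Matrix ι ι ℝ}
    (hP : P.IsHermitian) {c : ℝ} (hc : c ∈ upperBounds (spectrum ℝ P)) (v : ι → ℝ) :
    √(v ⬝ᵥ P *ᵥ v) ≤ √c * √(v ⬝ᵥ v) := by
  have hv : 0 ≤ v ⬝ᵥ v := Finset.sum_nonneg fun i _ => mul_self_nonneg (v i)
  rw [← Real.sqrt_mul' _ hv]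
  exact Real.sqrt_le_sqrt (hP.dotProduct_mulVec_le_mul_dotProduct hc v)

end Matrix

theorem stmt_17_general {n : ℕ} (P : Matrix (Fin n) (Fin n) ℝ) (hP : P.PosDef)
    (ε : ℝ) (hε1 : ε < 1)
    (lmax : ℝ) (hlmax : IsGreatest (spectrum ℝ P) lmax) :
    {x : Fin n → ℝ | x ⬝ᵥ P *ᵥ x ≤ ε} ⊆ interior {x : Fin n → ℝ | x ⬝ᵥ P *ᵥ x ≤ 1} ∧
    ∀ x ∈ {x : Fin n → ℝ | x ⬝ᵥ P *ᵥ x ≤ ε},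
      ∀ y ∈ frontier {x : Fin n → ℝ | x ⬝ᵥ P *ᵥ x ≤ 1},
        (1 - Real.sqrt ε) / Real.sqrt lmax ≤ Real.sqrt (∑ i, (x i - y i) ^ 2) := by
  have hf : Continuous fun x : Fin n → ℝ => x ⬝ᵥ P *ᵥ x := by fun_prop
  refine ⟨fun x hx => ?_, fun x (hx : _ ≤ ε) y hy => ?_⟩
  · exact interior_maximal (fun z (hz : _ < 1) => hz.le) (isOpen_lt hf continuous_const)
      (lt_of_le_of_lt hx hε1)
  have hy : y ⬝ᵥ P *ᵥ y = 1 := frontier_le_subset_eq hf continuous_const hy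
  have htri := hP.posSemidef.sqrt_dotProduct_mulVec_add_le x (y - x)
  rw [add_sub_cancel, hy, Real.sqrt_one] at htri
  have hdist : (y - x) ⬝ᵥ (y - x) = ∑ i, (x i - y i) ^ 2 :=
    Finset.sum_congr rfl fun i _ => by simp only [Pi.sub_apply]; ring
  refine div_le_of_le_mul₀ (Real.sqrt_nonneg _) (Real.sqrt_nonneg _) ?_
  calc 1 - √ε ≤ 1 - √(x ⬝ᵥ P *ᵥ x) := by gcongr
    _ ≤ √((y - x) ⬝ᵥ P *ᵥ (y - x)) := by linarith
    _ ≤ √lmax * √((y - x) ⬝ᵥ (y - x)) := hP.isHermitian.sqrt_dotProduct_mulVec_le hlmax.2 _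
    _ = √(∑ i, (x i - y i) ^ 2) * √lmax := by rw [hdist, mul_comm]

/-- Safety margin between the inner safe set and the safe set: with `P` symmetric positive
definite, `0 < ε < 1`, and `λ_max` the largest eigenvalue of `P` (a greatest element of its
real spectrum), `E_ε = {x : xᵀPx ≤ ε}` lies in the interior of `E_C = {x : xᵀPx ≤ 1}`, and
the Euclidean distance from any point of `E_ε` to any point of the boundary of `E_C` is at
least `(1 - √ε)/√λ_max`. -/
theorem stmt_17 {n : ℕ} (P : Matrix (Fin n) (Fin n) ℝ) (hP : P.PosDef)
    (ε : ℝ) (hε : 0 < ε) (hε1 : ε < 1)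
    (lmax : ℝ) (hlmax : IsGreatest (spectrum ℝ P) lmax) :
    {x : Fin n → ℝ | x ⬝ᵥ P *ᵥ x ≤ ε} ⊆ interior {x : Fin n → ℝ | x ⬝ᵥ P *ᵥ x ≤ 1} ∧
    ∀ x ∈ {x : Fin n → ℝ | x ⬝ᵥ P *ᵥ x ≤ ε},
      ∀ y ∈ frontier {x : Fin n → ℝ | x ⬝ᵥ P *ᵥ x ≤ 1},
        (1 - Real.sqrt ε) / Real.sqrt lmax ≤ Real.sqrt (∑ i, (x i - y i) ^ 2) :=
  stmt_17_general P hP ε hε1 lmax hlmax
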